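/- arXiv:quant-ph/0701175 — 5 statements merged into one kernel-verified Lean document; each statement's English description precedes it below -/
import Mathlib

section
/- Let A and O₁,…,O_m be square matrices such that [A, O_i] = Σ_j M_{ij} O_j for all i, where M is an m×m real matrix. Then for all t ∈ ℝ, e^{-At} O_i e^{At} = Σ_j (e^{-Mt})_{ij} O_j. -/
set_option maxHeartbeats 1000000

open NormedSpace ContinuousLinearMap

section aux

variable {𝔸 : Type*} [NormedRing 𝔸] [NormedAlgebra ℝ 𝔸] [CompleteSpace 𝔸]

/-- Left multiplication as a ring homomorphism into continuous linear endomorphisms. -/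
noncomputable def mulLeftRingHom' (𝔸 : Type*) [NormedRing 𝔸] [NormedAlgebra ℝ 𝔸] :
    𝔸 →+* (𝔸 →L[ℝ] 𝔸) where
  toFun a := ContinuousLinearMap.mul ℝ 𝔸 a
  map_one' := by ext x; simp
  map_mul' a b := by ext x; simp [mul_assoc]
  map_zero' := by ext x; simp
  map_add' a b := by ext x; simp [add_mul]

/-- Right multiplication as a ring homomorphism from the opposite algebra. -/
noncomputable def mulRightRingHom' (𝔸 : Type*) [NormedRing 𝔸] [NormedAlgebra ℝ 𝔸] :
    𝔸ᵐᵒᵖ →+* (𝔸 →L[ℝ] 𝔸) where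
  toFun a := (ContinuousLinearMap.mul ℝ 𝔸).flip a.unop
  map_one' := by ext x; simp
  map_mul' a b := by ext x; simp [mul_assoc]
  map_zero' := by ext x; simp
  map_add' a b := by ext x; simp [mul_add]

lemma exp_mulLeft' (a : 𝔸) :
    exp (ContinuousLinearMap.mul ℝ 𝔸 a) = ContinuousLinearMap.mul ℝ 𝔸 (exp a) := by
  letI : NormedAlgebra ℚ 𝔸 := NormedAlgebra.restrictScalars ℚ ℝ 𝔸
  letI : NormedAlgebra ℚ (𝔸 →L[ℝ] 𝔸) := NormedAlgebra.restrictScalars ℚ ℝ (𝔸 →L[ℝ] 𝔸)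
  exact (map_exp (mulLeftRingHom' 𝔸) (ContinuousLinearMap.mul ℝ 𝔸).continuous a).symm

lemma exp_mulRight' (a : 𝔸) :
    exp ((ContinuousLinearMap.mul ℝ 𝔸).flip a)
      = (ContinuousLinearMap.mul ℝ 𝔸).flip (exp a) := by
  letI : NormedAlgebra ℚ 𝔸 := NormedAlgebra.restrictScalars ℚ ℝ 𝔸
  letI : NormedAlgebra ℚ (𝔸 →L[ℝ] 𝔸) := NormedAlgebra.restrictScalars ℚ ℝ (𝔸 →L[ℝ] 𝔸)
  have h := map_exp (mulRightRingHom' 𝔸)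
    (((ContinuousLinearMap.mul ℝ 𝔸).flip.continuous).comp MulOpposite.continuous_unop)
    (MulOpposite.op a)
  rw [exp_op] at h
  exact h.symm

lemma exp_left_right_apply' (a b X : 𝔸) :
    exp (ContinuousLinearMap.mul ℝ 𝔸 a + (ContinuousLinearMap.mul ℝ 𝔸).flip b) X
      = exp a * X * exp b := by
  have hc : Commute (ContinuousLinearMap.mul ℝ 𝔸 a) ((ContinuousLinearMap.mul ℝ 𝔸).flip b) := by
    ext x; simp [mul_assoc]
  letI : NormedAlgebra ℚ (𝔸 →L[ℝ] 𝔸) := NormedAlgebra.restrictScalars ℚ ℝ (𝔸 →L[ℝ] 𝔸)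
  rw [exp_add_of_commute hc, exp_mulLeft', exp_mulRight']
  simp [mul_assoc]

lemma clm_expSeries_summable' (x : 𝔸 →L[ℝ] 𝔸) :
    Summable fun k : ℕ => ((k.factorial : ℝ)⁻¹) • x ^ k :=
  NormedSpace.expSeries_summable' x

end aux

/-- If `[A, O_i] = Σ_j M_{ij} O_j` for all `i`, then for all `t ∈ ℝ`,
`e^{-At} O_i e^{At} = Σ_j (e^{-Mt})_{ij} O_j`. -/
theorem exp_conj_of_bracket_relation (n m : ℕ)
    (A : Matrix (Fin n) (Fin n) ℝ) (O : Fin m → Matrix (Fin n) (Fin n) ℝ)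
    (M : Matrix (Fin m) (Fin m) ℝ)
    (h : ∀ i, A * O i - O i * A = ∑ j, M i j • O j) :
    ∀ (t : ℝ) (i : Fin m),
      NormedSpace.exp ((-t) • A) * O i * NormedSpace.exp (t • A) =
        ∑ j, (NormedSpace.exp ((-t) • M)) i j • O j := by
  intro t i
  letI : SeminormedRing (Matrix (Fin n) (Fin n) ℝ) := Matrix.linftyOpSemiNormedRing
  letI : NormedRing (Matrix (Fin n) (Fin n) ℝ) := Matrix.linftyOpNormedRing
  letI : NormedAlgebra ℝ (Matrix (Fin n) (Fin n) ℝ) := Matrix.linftyOpNormedAlgebra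
  letI : SeminormedRing (Matrix (Fin m) (Fin m) ℝ) := Matrix.linftyOpSemiNormedRing
  letI : NormedRing (Matrix (Fin m) (Fin m) ℝ) := Matrix.linftyOpNormedRing
  letI : NormedAlgebra ℝ (Matrix (Fin m) (Fin m) ℝ) := Matrix.linftyOpNormedAlgebra
  letI : CompleteSpace (Matrix (Fin n) (Fin n) ℝ) :=
    (inferInstanceAs (CompleteSpace (Fin n → Fin n → ℝ)))
  letI : CompleteSpace (Matrix (Fin m) (Fin m) ℝ) :=
    (inferInstanceAs (CompleteSpace (Fin m → Fin m → ℝ)))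
  letI : NormedRing (Matrix (Fin n) (Fin n) ℝ →L[ℝ] Matrix (Fin n) (Fin n) ℝ) :=
    ContinuousLinearMap.toNormedRing
  letI : NormedAlgebra ℝ (Matrix (Fin n) (Fin n) ℝ →L[ℝ] Matrix (Fin n) (Fin n) ℝ) :=
    ContinuousLinearMap.toNormedAlgebra
  letI : IsTopologicalRing (Matrix (Fin n) (Fin n) ℝ →L[ℝ] Matrix (Fin n) (Fin n) ℝ) :=
    NonUnitalSeminormedRing.toIsTopologicalRing
  set Φ : Matrix (Fin n) (Fin n) ℝ →L[ℝ] Matrix (Fin n) (Fin n) ℝ :=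
    ContinuousLinearMap.mul ℝ _ A - (ContinuousLinearMap.mul ℝ _).flip A with hΦdef
  have hΦ : ∀ i, Φ (O i) = ∑ j, M i j • O j := by
    intro i
    rw [hΦdef]
    exact h i
  have hpow : ∀ (k : ℕ) (i : Fin m), (Φ ^ k) (O i) = ∑ j, (M ^ k) i j • O j := by
    intro k
    induction k with
    | zero => intro i; simp [Matrix.one_apply]
    | succ k ih =>
      intro i
      have h1 : (Φ ^ (k + 1)) (O i) = Φ ((Φ ^ k) (O i)) := by
        rw [pow_succ']; rfl
      rw [h1, ih i, map_sum]
      simp_rw [map_smul, hΦ, Finset.smul_sum, smul_smul]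
      rw [Finset.sum_comm]
      refine Finset.sum_congr rfl fun l _ => ?_
      rw [pow_succ, Matrix.mul_apply, Finset.sum_smul]
  have key1 : (-t) • Φ = ContinuousLinearMap.mul ℝ _ ((-t) • A)
      + (ContinuousLinearMap.mul ℝ _).flip (t • A) := by
    ext X : 1
    show (-t) • (A * X - X * A) = ((-t) • A) * X + X * (t • A)
    simp [smul_sub, smul_mul_assoc, mul_smul_comm]
  have lhs_eq : exp ((-t) • A) * O i * exp (t • A) = exp ((-t) • Φ) (O i) := by
    rw [key1]
    exact (exp_left_right_apply' _ _ _).symm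
  have hsΦ := clm_expSeries_summable' ((-t) • Φ)
  have happ : exp ((-t) • Φ) (O i)
      = ∑' k : ℕ, ((k.factorial : ℝ)⁻¹) • ((((-t) • Φ) ^ k) (O i)) := by
    rw [exp_eq_tsum ℝ]
    have h2 := ((hsΦ.hasSum.mapL
      (ContinuousLinearMap.apply ℝ (Matrix (Fin n) (Fin n) ℝ) (O i))).tsum_eq).symm
    exact h2
  have hterm : ∀ k : ℕ, ((k.factorial : ℝ)⁻¹) • ((((-t) • Φ) ^ k) (O i))
      = ∑ j, ((((k.factorial : ℝ)⁻¹) • ((-t) • M) ^ k) i j) • O j := by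
    intro k
    rw [smul_pow]
    simp only [ContinuousLinearMap.smul_apply, smul_pow, Matrix.smul_apply, smul_eq_mul,
      smul_smul]
    rw [hpow k i, Finset.smul_sum]
    refine Finset.sum_congr rfl fun j _ => ?_
    rw [smul_smul]
    congr 1
    ring
  have hsM := NormedSpace.expSeries_summable' (𝕂 := ℝ) ((-t) • M)
  have hsMe : ∀ j, Summable fun k : ℕ => (((k.factorial : ℝ)⁻¹) • ((-t) • M) ^ k) i j := by
    intro j
    exact Pi.summable.mp (Pi.summable.mp hsM i) j
  have hentry : ∀ j, exp ((-t) • M) i j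
      = ∑' k : ℕ, (((k.factorial : ℝ)⁻¹) • ((-t) • M) ^ k) i j := by
    intro j
    rw [exp_eq_tsum ℝ]
    show (∑' k : ℕ, ((k.factorial : ℝ)⁻¹) • ((-t) • M) ^ k) i j = _
    erw [tsum_apply hsM, tsum_apply (Pi.summable.mp hsM i)]
  rw [lhs_eq, happ]
  rw [tsum_congr hterm, Summable.tsum_finsetSum (fun j _ => (hsMe j).smul_const (O j))]
  refine Finset.sum_congr rfl fun j _ => ?_
  rw [hentry j, Summable.tsum_smul_const (hsMe j)]
end

section
/- Consider on ℝ^{N²-1} = ℝ^m × ℝ^{N²-1-m} the controlled equation ṁ = O₀m + Σᵢ₌₁..m uᵢ(t)Oᵢm + Dm + g, with O₀ = diag(O₀¹¹, O₀²²) skew-symmetric block diagonal, Oᵢ = [[0,Oᵢ¹²],[-(Oᵢ¹²)ᵀ,0]] skew-symmetric, D symmetric negative definite, [O₀,D]=0, O₀g=0, and e^{-O₀t}Oᵢe^{O₀t} = Σⱼ(e^{-O₀¹¹t})ᵢⱼOⱼ. Suppose ξ ∈ ℝ^m, η ∈ ℝ^{N²-1-m} solve: Σᵢξᵢ Oᵢ¹²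 η + D₁₁m₀¹ + D₁₂η + g₁ = 0 and -Σᵢξᵢ(Oᵢ¹²)ᵀm₀¹ + D₂₁m₀¹ + D₂₂η + g₂ = 0 (with D, g partitioned conformally). Then m^∞(t) = (e^{O₀¹¹(t-t₀)}m₀¹, e^{O₀²²(t-t₀)}η) is an exact solution of the controlled equation under the control u(t) = e^{-O₀¹¹(t-t₀)}ξ. -/
open Matrix

section Aux

open NormedSpace

/-- `mulVec` as a linear map in the matrix argument. -/
noncomputable def mulVecLM {n : Type*} [Fintype n] (w : n → ℝ) :
    Matrix n n ℝ →ₗ[ℝ] (n → ℝ) where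
  toFun M := M.mulVec w
  map_add' A B := Matrix.add_mulVec A B w
  map_smul' c A := Matrix.smul_mulVec c A w

@[simp] lemma mulVecLM_apply {n : Type*} [Fintype n] (w : n → ℝ) (M : Matrix n n ℝ) :
    mulVecLM w M = M.mulVec w := rfl

lemma exp_fromBlocks_diag {m k : ℕ} (A : Matrix (Fin m) (Fin m) ℝ)
    (B : Matrix (Fin k) (Fin k) ℝ) :
    exp (fromBlocks A 0 0 B) = fromBlocks (exp A) 0 0 (exp B) := by
  letI : SeminormedRing (Matrix (Fin m) (Fin m) ℝ) := Matrix.linftyOpSemiNormedRing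
  letI : NormedRing (Matrix (Fin m) (Fin m) ℝ) := Matrix.linftyOpNormedRing
  letI : NormedAlgebra ℝ (Matrix (Fin m) (Fin m) ℝ) := Matrix.linftyOpNormedAlgebra
  letI : SeminormedRing (Matrix (Fin k) (Fin k) ℝ) := Matrix.linftyOpSemiNormedRing
  letI : NormedRing (Matrix (Fin k) (Fin k) ℝ) := Matrix.linftyOpNormedRing
  letI : NormedAlgebra ℝ (Matrix (Fin k) (Fin k) ℝ) := Matrix.linftyOpNormedAlgebra
  letI : SeminormedRing (Matrix (Fin m ⊕ Fin k) (Fin m ⊕ Fin k) ℝ) :=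
    Matrix.linftyOpSemiNormedRing
  letI : NormedRing (Matrix (Fin m ⊕ Fin k) (Fin m ⊕ Fin k) ℝ) := Matrix.linftyOpNormedRing
  letI : NormedAlgebra ℝ (Matrix (Fin m ⊕ Fin k) (Fin m ⊕ Fin k) ℝ) :=
    Matrix.linftyOpNormedAlgebra
  letI : NormedAlgebra ℚ (Matrix (Fin m) (Fin m) ℝ) := .restrictScalars ℚ ℝ _
  letI : NormedAlgebra ℚ (Matrix (Fin k) (Fin k) ℝ) := .restrictScalars ℚ ℝ _
  let φ : (Matrix (Fin m) (Fin m) ℝ × Matrix (Fin k) (Fin k) ℝ) →ₐ[ℝ]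
      Matrix (Fin m ⊕ Fin k) (Fin m ⊕ Fin k) ℝ :=
    { toFun := fun p => fromBlocks p.1 0 0 p.2
      map_one' := Matrix.fromBlocks_one
      map_mul' := fun p q => by
        rw [Matrix.fromBlocks_multiply]; simp
      map_zero' := Matrix.fromBlocks_zero
      map_add' := fun p q => by
        simpa using (Matrix.fromBlocks_add p.1 0 0 p.2 q.1 0 0 q.2).symm
      commutes' := fun r => by
        show fromBlocks (algebraMap ℝ _ r) 0 0 (algebraMap ℝ _ r) = algebraMap ℝ _ r
        rw [Matrix.algebraMap_eq_diagonal, Matrix.algebraMap_eq_diagonal,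
          Matrix.algebraMap_eq_diagonal, Matrix.fromBlocks_diagonal]
        congr 1
        funext x
        rcases x with x | x <;> rfl }
  have hφ : Continuous φ := φ.toLinearMap.continuous_of_finiteDimensional
  have h := map_exp φ hφ (A, B)
  have h1 : φ (A, B) = fromBlocks A 0 0 B := rfl
  have h2 : φ (exp (A, B)) =
      fromBlocks ((exp (A, B)).1) 0 0 ((exp (A, B)).2) := rfl
  rw [h1] at h
  exact h.symm.trans
    (congrArg₂ (fun X Y => fromBlocks X 0 0 Y) (Prod.fst_exp (A, B)) (Prod.snd_exp (A, B)))

lemma hasDerivAt_exp_smul_mulVec {n : Type*} [Fintype n] [DecidableEq n]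
    (A : Matrix n n ℝ) (w : n → ℝ) (t : ℝ) :
    HasDerivAt (fun s : ℝ => (exp (s • A)).mulVec w) ((exp (t • A) * A).mulVec w) t := by
  letI : SeminormedRing (Matrix n n ℝ) := Matrix.linftyOpSemiNormedRing
  letI : NormedRing (Matrix n n ℝ) := Matrix.linftyOpNormedRing
  letI : NormedAlgebra ℝ (Matrix n n ℝ) := Matrix.linftyOpNormedAlgebra
  have h := hasDerivAt_exp_smul_const (𝕂 := ℝ) A t
  exact ((LinearMap.toContinuousLinearMap (mulVecLM w)).hasFDerivAt.comp_hasDerivAt t h :)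

lemma exp_smul_mulVec_eq_self {n : Type*} [Fintype n] [DecidableEq n]
    {A : Matrix n n ℝ} {w : n → ℝ} (hw : A.mulVec w = 0) (t : ℝ) :
    (exp (t • A)).mulVec w = w := by
  have hd : ∀ s : ℝ, HasDerivAt (fun s : ℝ => (exp (s • A)).mulVec w) 0 s := by
    intro s
    have h := hasDerivAt_exp_smul_mulVec A w s
    rwa [← Matrix.mulVec_mulVec, hw, Matrix.mulVec_zero] at h
  have hconst := is_const_of_deriv_eq_zero (𝕜 := ℝ)
    (f := fun s : ℝ => (exp (s • A)).mulVec w)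
    (fun s => (hd s).differentiableAt) (fun s => (hd s).deriv) t 0
  simpa [exp_zero, Matrix.one_mulVec] using hconst

end Aux

/-- With `O₀ = diag(O₀¹¹,O₀²²)` skew-symmetric block diagonal,
`Oᵢ = [[0,Oᵢ¹²],[-(Oᵢ¹²)ᵀ,0]]`, `D` symmetric negative definite, `[O₀,D]=0`, `O₀g=0`,
and the conjugation identity `e^{-O₀t}Oᵢe^{O₀t} = Σⱼ(e^{-O₀¹¹t})ᵢⱼOⱼ`, if `(ξ,η)` solve
the stationary algebraic equations, then
`m^∞(t) = (e^{O₀¹¹(t-t₀)}m₀¹, e^{O₀²²(t-t₀)}η)` solves the controlled equation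
`ṁ = O₀m + Σᵢ uᵢ(t)Oᵢm + Dm + g` with control `u(t) = e^{-O₀¹¹(t-t₀)}ξ`. -/
theorem stationary_solution_exact (m k : ℕ) (t₀ : ℝ)
    (O11 : Matrix (Fin m) (Fin m) ℝ) (hO11 : O11ᵀ = -O11)
    (O22 : Matrix (Fin k) (Fin k) ℝ) (hO22 : O22ᵀ = -O22)
    (O12 : Fin m → Matrix (Fin m) (Fin k) ℝ)
    (D11 : Matrix (Fin m) (Fin m) ℝ) (hD11 : D11.IsSymm)
    (D22 : Matrix (Fin k) (Fin k) ℝ) (hD22 : D22.IsSymm)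
    (D12 : Matrix (Fin m) (Fin k) ℝ)
    (g1 : Fin m → ℝ) (g2 : Fin k → ℝ) (m01 : Fin m → ℝ)
    (ξ : Fin m → ℝ) (η : Fin k → ℝ)
    (hDneg : (-(Matrix.fromBlocks D11 D12 D12ᵀ D22)).PosDef)
    (hcomm : (Matrix.fromBlocks O11 0 0 O22) * (Matrix.fromBlocks D11 D12 D12ᵀ D22) =
      (Matrix.fromBlocks D11 D12 D12ᵀ D22) * (Matrix.fromBlocks O11 0 0 O22))
    (hg : (Matrix.fromBlocks O11 0 0 O22).mulVec (Sum.elim g1 g2) = 0)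
    (hconj : ∀ (t : ℝ) (i : Fin m),
      NormedSpace.exp ((-t) • Matrix.fromBlocks O11 0 0 O22) *
          (Matrix.fromBlocks 0 (O12 i) (-(O12 i)ᵀ) 0) *
          NormedSpace.exp (t • Matrix.fromBlocks O11 0 0 O22) =
        ∑ j, (NormedSpace.exp ((-t) • O11)) i j •
          (Matrix.fromBlocks 0 (O12 j) (-(O12 j)ᵀ) 0))
    (hstat1 : (∑ i, ξ i • (O12 i).mulVec η) + D11.mulVec m01 + D12.mulVec η + g1 = 0)
    (hstat2 : (-(∑ i, ξ i • (O12 i)ᵀ.mulVec m01)) + D12ᵀ.mulVec m01 + D22.mulVec η + g2 = 0) :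
    ∀ t : ℝ,
      HasDerivAt
        (fun s : ℝ => (Sum.elim
          ((NormedSpace.exp ((s - t₀) • O11)).mulVec m01)
          ((NormedSpace.exp ((s - t₀) • O22)).mulVec η) : Fin m ⊕ Fin k → ℝ))
        ((Matrix.fromBlocks O11 0 0 O22).mulVec
            (Sum.elim ((NormedSpace.exp ((t - t₀) • O11)).mulVec m01)
              ((NormedSpace.exp ((t - t₀) • O22)).mulVec η)) +
          (∑ i, ((NormedSpace.exp ((-(t - t₀)) • O11)).mulVec ξ) i •
            (Matrix.fromBlocks 0 (O12 i) (-(O12 i)ᵀ) 0).mulVec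
              (Sum.elim ((NormedSpace.exp ((t - t₀) • O11)).mulVec m01)
                ((NormedSpace.exp ((t - t₀) • O22)).mulVec η))) +
          (Matrix.fromBlocks D11 D12 D12ᵀ D22).mulVec
            (Sum.elim ((NormedSpace.exp ((t - t₀) • O11)).mulVec m01)
              ((NormedSpace.exp ((t - t₀) • O22)).mulVec η)) +
          Sum.elim g1 g2) t := by
  intro t
  letI : SeminormedRing (Matrix (Fin m ⊕ Fin k) (Fin m ⊕ Fin k) ℝ) :=
    Matrix.linftyOpSemiNormedRing
  letI : NormedRing (Matrix (Fin m ⊕ Fin k) (Fin m ⊕ Fin k) ℝ) := Matrix.linftyOpNormedRing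
  letI : NormedAlgebra ℝ (Matrix (Fin m ⊕ Fin k) (Fin m ⊕ Fin k) ℝ) :=
    Matrix.linftyOpNormedAlgebra
  set O0 : Matrix (Fin m ⊕ Fin k) (Fin m ⊕ Fin k) ℝ := Matrix.fromBlocks O11 0 0 O22 with hO0
  set Dd : Matrix (Fin m ⊕ Fin k) (Fin m ⊕ Fin k) ℝ := Matrix.fromBlocks D11 D12 D12ᵀ D22
    with hDd
  set v : Fin m ⊕ Fin k → ℝ := Sum.elim m01 η with hv
  set gg : Fin m ⊕ Fin k → ℝ := Sum.elim g1 g2 with hgg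
  set Od : Fin m → Matrix (Fin m ⊕ Fin k) (Fin m ⊕ Fin k) ℝ :=
    fun i => Matrix.fromBlocks 0 (O12 i) (-(O12 i)ᵀ) 0 with hOd
  set τ : ℝ := t - t₀ with hτdef
  -- key function identity
  have hfun : ∀ s : ℝ,
      (Sum.elim ((NormedSpace.exp ((s - t₀) • O11)).mulVec m01)
        ((NormedSpace.exp ((s - t₀) • O22)).mulVec η) : Fin m ⊕ Fin k → ℝ) =
      (NormedSpace.exp ((s - t₀) • O0)).mulVec v := by
    intro s
    have hb : (s - t₀) • O0 =
        Matrix.fromBlocks ((s - t₀) • O11) 0 0 ((s - t₀) • O22) := by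
      rw [hO0, Matrix.fromBlocks_smul, smul_zero, smul_zero]
    rw [hb, exp_fromBlocks_diag, hv, Matrix.fromBlocks_mulVec]
    simp [Matrix.zero_mulVec]
  -- exp of τ • O0 and its inverse
  set E : Matrix (Fin m ⊕ Fin k) (Fin m ⊕ Fin k) ℝ := NormedSpace.exp (τ • O0) with hE
  set E' : Matrix (Fin m ⊕ Fin k) (Fin m ⊕ Fin k) ℝ := NormedSpace.exp ((-τ) • O0) with hE'
  have hEE : E' * E = 1 := by
    rw [hE, hE', ← Matrix.exp_add_of_commute _ _
      (((Commute.refl O0).smul_left (-τ)).smul_right τ)]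
    rw [← add_smul, neg_add_cancel, zero_smul, NormedSpace.exp_zero]
  -- the derivative
  have hder : HasDerivAt (fun s : ℝ => (NormedSpace.exp ((s - t₀) • O0)).mulVec v)
      ((E * O0).mulVec v) t := by
    have hG := hasDerivAt_exp_smul_mulVec O0 v τ
    have hf : HasDerivAt (fun s : ℝ => s - t₀) 1 t := (hasDerivAt_id t).sub_const t₀
    have := HasDerivAt.scomp t (by exact hG) hf
    simpa [hE, Function.comp_def] using this
  -- commute E with O0
  have hEO : E * O0 = O0 * E :=
    (((Commute.refl O0).smul_left τ).exp_left).eq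
  -- commute E with Dd
  have hED : Dd * E = E * Dd := by
    have hC : Commute Dd O0 := (show Commute O0 Dd from hcomm).symm
    exact ((hC.smul_right τ).exp_right).eq
  -- the control coefficients
  have htr : NormedSpace.exp ((-τ) • O11) = (NormedSpace.exp (τ • O11))ᵀ := by
    rw [← Matrix.exp_transpose]
    congr 1
    rw [Matrix.transpose_smul, hO11, smul_neg, neg_smul]
  -- conjugation identity at -τ
  have hconj' : ∀ i, E * Od i * E' = ∑ j, (NormedSpace.exp (τ • O11)) i j • Od j := by
    intro i
    have h := hconj (-τ) i
    rw [neg_neg] at h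
    exact h
  -- main matrix identity for the control sum
  have hS : (∑ i, ((NormedSpace.exp ((-τ) • O11)).mulVec ξ) i • Od i) =
      E * (∑ i, ξ i • Od i) * E' := by
    rw [Finset.mul_sum, Finset.sum_mul]
    have : ∀ i, E * (ξ i • Od i) * E' = ξ i • (E * Od i * E') := by
      intro i
      rw [mul_smul_comm, smul_mul_assoc]
    simp_rw [this, hconj', Finset.smul_sum, smul_smul]
    rw [Finset.sum_comm]
    refine Finset.sum_congr rfl fun j _ => ?_
    rw [← Finset.sum_smul]
    congr 1
    rw [htr]
    simp [Matrix.mulVec, dotProduct, Matrix.transpose_apply, mul_comm]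
  -- the stationary equation in block form
  have hzero : (∑ i, ξ i • Od i).mulVec v + Dd.mulVec v + gg = 0 := by
    have h1 : (∑ i, ξ i • Od i).mulVec v = ∑ i, ξ i • (Od i).mulVec v := by
      rw [← mulVecLM_apply v, map_sum]
      simp
    rw [h1]
    funext x
    rcases x with x | x
    · have h := congrFun hstat1 x
      simp only [hOd, hv, hDd, hgg, Matrix.fromBlocks_mulVec, Matrix.zero_mulVec,
        Matrix.neg_mulVec, Pi.add_apply, Pi.zero_apply, Finset.sum_apply, Pi.smul_apply,
        Sum.elim_inl, Sum.elim_comp_inl, Sum.elim_comp_inr, zero_add, add_zero, smul_eq_mul,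
        Pi.neg_apply] at h ⊢
      linarith
    · have h := congrFun hstat2 x
      simp only [hOd, hv, hDd, hgg, Matrix.fromBlocks_mulVec, Matrix.zero_mulVec,
        Matrix.neg_mulVec, Pi.add_apply, Pi.zero_apply, Finset.sum_apply, Pi.smul_apply,
        Sum.elim_inr, Sum.elim_comp_inl, Sum.elim_comp_inr, zero_add, add_zero, smul_eq_mul,
        Pi.neg_apply, mul_neg, Finset.sum_neg_distrib] at h ⊢
      linarith
  -- the value identity
  have hval : O0.mulVec (E.mulVec v) +
      (∑ i, ((NormedSpace.exp ((-τ) • O11)).mulVec ξ) i • (Od i).mulVec (E.mulVec v)) +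
      Dd.mulVec (E.mulVec v) + gg = (E * O0).mulVec v := by
    have hS' : (∑ i, ((NormedSpace.exp ((-τ) • O11)).mulVec ξ) i •
        (Od i).mulVec (E.mulVec v)) =
        E.mulVec ((∑ i, ξ i • Od i).mulVec v) := by
      have h2 : (∑ i, ((NormedSpace.exp ((-τ) • O11)).mulVec ξ) i •
          (Od i).mulVec (E.mulVec v)) =
          (∑ i, ((NormedSpace.exp ((-τ) • O11)).mulVec ξ) i • Od i).mulVec (E.mulVec v) := by
        rw [← mulVecLM_apply (E.mulVec v), map_sum]
        simp
      rw [h2, hS]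
      rw [Matrix.mulVec_mulVec, Matrix.mulVec_mulVec, mul_assoc, mul_assoc, hEE, mul_one]
    have hD' : Dd.mulVec (E.mulVec v) = E.mulVec (Dd.mulVec v) := by
      rw [Matrix.mulVec_mulVec, hED, ← Matrix.mulVec_mulVec]
    have hg' : gg = E.mulVec gg := (exp_smul_mulVec_eq_self hg τ).symm
    rw [hS', hD']
    nth_rewrite 1 [hg']
    have hrest : E.mulVec ((∑ i, ξ i • Od i).mulVec v) + E.mulVec (Dd.mulVec v) +
        E.mulVec gg = 0 := by
      rw [← Matrix.mulVec_add, ← Matrix.mulVec_add, hzero, Matrix.mulVec_zero]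
    have hre : O0.mulVec (E.mulVec v) + E.mulVec ((∑ i, ξ i • Od i).mulVec v) +
        E.mulVec (Dd.mulVec v) + E.mulVec gg =
        O0.mulVec (E.mulVec v) + (E.mulVec ((∑ i, ξ i • Od i).mulVec v) +
          E.mulVec (Dd.mulVec v) + E.mulVec gg) := by abel
    rw [hre, hrest, add_zero, hEO]
    rw [← Matrix.mulVec_mulVec]
  -- put everything together
  simp only [hfun]
  rw [hfun t]
  convert hder using 1
end

section
/- Under the hypotheses of the previous statement (existence of the stationary solution m^∞(t) and negative definiteness of D), every solution m(t) of ṁ = O₀m + Σᵢuᵢ(t)Oᵢm + Dm + g with control u(t) = e^{-O₀¹¹(t-t₀)}ξ satisfies |m(t) - m^∞(t)| ≤ e^{-d_min(t-t₀)}|m(t₀) - m^∞(t₀)|, where -d_min < 0 is the maximal eigenvalue of D. In particular, the first m components of m(t) converge to e^{O₀¹¹(t-t₀)}m₀¹ if they start near m₀¹. -/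
open Matrix

private lemma dot_skew {n : Type*} [Fintype n] (A : Matrix n n ℝ) (hA : Aᵀ = -A)
    (x : n → ℝ) : x ⬝ᵥ A.mulVec x = 0 := by
  have h1 : x ⬝ᵥ A.mulVec x = Aᵀ.mulVec x ⬝ᵥ x := by
    rw [Matrix.dotProduct_mulVec, Matrix.mulVec_transpose]
  rw [hA, Matrix.neg_mulVec, neg_dotProduct,
    dotProduct_comm (A *ᵥ x) x] at h1
  linarith

private lemma abs_coord_le_norm {n : Type*} [Fintype n] (x : EuclideanSpace ℝ n) (i : n) :
    |x i| ≤ ‖x‖ := by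
  rw [EuclideanSpace.norm_eq]
  have h1 : |x i| = Real.sqrt (‖x i‖ ^ 2) := by
    rw [Real.sqrt_sq_eq_abs]; simp
  rw [h1]
  apply Real.sqrt_le_sqrt
  exact Finset.single_le_sum (f := fun j => ‖x j‖ ^ 2) (fun j _ => by positivity)
    (Finset.mem_univ i)

theorem asymptotic_noise_decoupling (m k : ℕ) (t₀ d_min : ℝ) (hd : 0 < d_min)
    (O₀ : Matrix (Fin m ⊕ Fin k) (Fin m ⊕ Fin k) ℝ) (hO₀ : O₀ᵀ = -O₀)
    (O : Fin m → Matrix (Fin m ⊕ Fin k) (Fin m ⊕ Fin k) ℝ)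
    (hO : ∀ i, (O i)ᵀ = -(O i))
    (D : Matrix (Fin m ⊕ Fin k) (Fin m ⊕ Fin k) ℝ) (hDsymm : D.IsSymm)
    (hDquad : ∀ y : EuclideanSpace ℝ (Fin m ⊕ Fin k),
      y ⬝ᵥ D.mulVec y ≤ -d_min * ‖y‖ ^ 2)
    (g : Fin m ⊕ Fin k → ℝ)
    (O11 : Matrix (Fin m) (Fin m) ℝ) (O22 : Matrix (Fin k) (Fin k) ℝ)
    (m01 ξ : Fin m → ℝ) (η : Fin k → ℝ)
    (mInf : ℝ → EuclideanSpace ℝ (Fin m ⊕ Fin k))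
    (hmInf : ∀ t, mInf t = (WithLp.equiv 2 (Fin m ⊕ Fin k → ℝ)).symm (Sum.elim
      ((NormedSpace.exp ((t - t₀) • O11)).mulVec m01)
      ((NormedSpace.exp ((t - t₀) • O22)).mulVec η)))
    (hmInfSol : ∀ t, HasDerivAt mInf
      ((WithLp.equiv 2 (Fin m ⊕ Fin k → ℝ)).symm
        (O₀.mulVec (mInf t) +
          (∑ i, ((NormedSpace.exp ((-(t - t₀)) • O11)).mulVec ξ) i •
            (O i).mulVec (mInf t)) +
          D.mulVec (mInf t) + g)) t)
    (msol : ℝ → EuclideanSpace ℝ (Fin m ⊕ Fin k))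
    (hmsol : ∀ t, HasDerivAt msol
      ((WithLp.equiv 2 (Fin m ⊕ Fin k → ℝ)).symm
        (O₀.mulVec (msol t) +
          (∑ i, ((NormedSpace.exp ((-(t - t₀)) • O11)).mulVec ξ) i •
            (O i).mulVec (msol t)) +
          D.mulVec (msol t) + g)) t) :
    ∀ t, t₀ ≤ t →
      ‖msol t - mInf t‖ ≤ Real.exp (-d_min * (t - t₀)) * ‖msol t₀ - mInf t₀‖ ∧
      ∀ j : Fin m,
        |msol t (Sum.inl j) - (NormedSpace.exp ((t - t₀) • O11)).mulVec m01 j| ≤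
          Real.exp (-d_min * (t - t₀)) * ‖msol t₀ - mInf t₀‖ := by
  classical
  set u : ℝ → Fin m → ℝ :=
    fun t => (NormedSpace.exp ((-(t - t₀)) • O11)).mulVec ξ with hu
  set y : ℝ → EuclideanSpace ℝ (Fin m ⊕ Fin k) := fun s => msol s - mInf s with hy
  -- derivative of the difference
  set v : ℝ → (Fin m ⊕ Fin k → ℝ) := fun s =>
    O₀.mulVec (y s) + (∑ i, u s i • (O i).mulVec (y s)) + D.mulVec (y s) with hv
  have hyd : ∀ s, HasDerivAt y ((WithLp.equiv 2 (Fin m ⊕ Fin k → ℝ)).symm (v s)) s := by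
    intro s
    have h := (hmsol s).sub (hmInfSol s)
    refine h.congr_deriv ?_
    have key : ∀ (a b : (Fin m ⊕ Fin k) → ℝ),
        O₀.mulVec (a - b) + (∑ i, u s i • (O i).mulVec (a - b)) + D.mulVec (a - b) =
        (O₀.mulVec a + (∑ i, u s i • (O i).mulVec a) + D.mulVec a + g) -
        (O₀.mulVec b + (∑ i, u s i • (O i).mulVec b) + D.mulVec b + g) := by
      intro a b
      simp only [Matrix.mulVec_sub, smul_sub, Finset.sum_sub_distrib]
      abel
    have hyv : (v s : (Fin m ⊕ Fin k) → ℝ) =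
        (O₀.mulVec (msol s) + (∑ i, u s i • (O i).mulVec (msol s)) + D.mulVec (msol s) + g) -
        (O₀.mulVec (mInf s) + (∑ i, u s i • (O i).mulVec (mInf s)) + D.mulVec (mInf s) + g) := by
      rw [← key (msol s) (mInf s)]; rfl
    have hval : (WithLp.equiv 2 (Fin m ⊕ Fin k → ℝ)).symm (v s) =
        (WithLp.equiv 2 (Fin m ⊕ Fin k → ℝ)).symm
          (O₀.mulVec (msol s) + (∑ i, u s i • (O i).mulVec (msol s)) + D.mulVec (msol s) + g) -
        (WithLp.equiv 2 (Fin m ⊕ Fin k → ℝ)).symm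
          (O₀.mulVec (mInf s) + (∑ i, u s i • (O i).mulVec (mInf s)) + D.mulVec (mInf s) + g) := by
      rw [hyv]; rfl
    exact hval.symm
  -- inner product bound
  have hinner : ∀ s, (inner ℝ (y s) ((WithLp.equiv 2 (Fin m ⊕ Fin k → ℝ)).symm (v s)) : ℝ)
      ≤ -d_min * ‖y s‖ ^ 2 := by
    intro s
    have h1 : (inner ℝ (y s) ((WithLp.equiv 2 (Fin m ⊕ Fin k → ℝ)).symm (v s)) : ℝ)
        = (y s : (Fin m ⊕ Fin k) → ℝ) ⬝ᵥ v s := by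
      simp [PiLp.inner_apply, RCLike.inner_apply, dotProduct, mul_comm]
    rw [h1, hv]
    have hsum : (y s : (Fin m ⊕ Fin k) → ℝ) ⬝ᵥ (∑ i, u s i • (O i).mulVec (y s)) =
        ∑ i, u s i * ((y s) ⬝ᵥ (O i).mulVec (y s)) := by
      simp only [dotProduct, Finset.sum_apply, Pi.smul_apply, smul_eq_mul,
        Finset.mul_sum]
      rw [Finset.sum_comm]
      apply Finset.sum_congr rfl
      intro i _
      apply Finset.sum_congr rfl
      intro j _
      ring
    have h2 : (y s : (Fin m ⊕ Fin k) → ℝ) ⬝ᵥ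
        (O₀.mulVec (y s) + (∑ i, u s i • (O i).mulVec (y s)) + D.mulVec (y s)) =
        (y s) ⬝ᵥ O₀.mulVec (y s) + (∑ i, u s i * ((y s) ⬝ᵥ (O i).mulVec (y s))) +
          (y s) ⬝ᵥ D.mulVec (y s) := by
      simp [dotProduct_add, hsum]
    rw [h2, dot_skew O₀ hO₀]
    have h3 : ∀ i : Fin m, u s i * ((y s) ⬝ᵥ (O i).mulVec (y s)) = 0 := by
      intro i; rw [dot_skew (O i) (hO i)]; ring
    simp only [h3, Finset.sum_const_zero, zero_add, add_zero]
    exact hDquad (y s)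
  -- f = ‖y‖², derivative bound
  set f : ℝ → ℝ := fun s => ‖y s‖ ^ 2 with hf
  have hfd : ∀ s, HasDerivAt f
      (2 * (inner ℝ (y s) ((WithLp.equiv 2 (Fin m ⊕ Fin k → ℝ)).symm (v s)) : ℝ)) s := by
    intro s
    have h := HasDerivAt.inner ℝ (hyd s) (hyd s)
    have heq : (fun t => (inner ℝ (y t) (y t) : ℝ)) = f := by
      funext t; rw [real_inner_self_eq_norm_sq]
    rw [heq] at h
    refine h.congr_deriv ?_
    rw [real_inner_comm ((WithLp.equiv 2 (Fin m ⊕ Fin k → ℝ)).symm (v s)) (y s)]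
    ring
  -- F = f * exp(2 d_min (· - t₀)) is antitone on [t₀,∞)
  set F : ℝ → ℝ := fun s => f s * Real.exp (2 * d_min * (s - t₀)) with hF
  have hexp : ∀ s : ℝ, HasDerivAt (fun s => Real.exp (2 * d_min * (s - t₀)))
      (2 * d_min * Real.exp (2 * d_min * (s - t₀))) s := by
    intro s
    have h1 : HasDerivAt (fun s : ℝ => 2 * d_min * (s - t₀)) (2 * d_min) s := by
      simpa using ((hasDerivAt_id s).sub_const t₀).const_mul (2 * d_min)
    have := h1.exp
    convert this using 1
    ring
  have hFd : ∀ s, HasDerivAt F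
      ((2 * (inner ℝ (y s) ((WithLp.equiv 2 (Fin m ⊕ Fin k → ℝ)).symm (v s)) : ℝ)
        + 2 * d_min * f s) * Real.exp (2 * d_min * (s - t₀))) s := by
    intro s
    have h := (hfd s).mul (hexp s)
    refine h.congr_deriv ?_
    ring
  have hFanti : AntitoneOn F (Set.Ici t₀) := by
    apply antitoneOn_of_deriv_nonpos (convex_Ici t₀)
    · exact fun s _ => ((hFd s).continuousAt).continuousWithinAt
    · exact fun s _ => (hFd s).differentiableAt.differentiableWithinAt
    · intro s _
      rw [(hFd s).deriv]
      apply mul_nonpos_of_nonpos_of_nonneg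
      · have h1 := hinner s
        have hfs : f s = ‖y s‖ ^ 2 := rfl
        rw [hfs]
        linarith
      · exact (Real.exp_pos _).le
  -- main estimate
  intro t ht
  have hFt : F t ≤ F t₀ := hFanti (Set.self_mem_Ici) ht ht
  have hmain : ‖y t‖ ≤ Real.exp (-d_min * (t - t₀)) * ‖y t₀‖ := by
    have h1 : ‖y t‖ ^ 2 ≤ (Real.exp (-d_min * (t - t₀)) * ‖y t₀‖) ^ 2 := by
      have hE : (0:ℝ) < Real.exp (2 * d_min * (t - t₀)) := Real.exp_pos _
      have hFt' : ‖y t‖ ^ 2 * Real.exp (2 * d_min * (t - t₀)) ≤ ‖y t₀‖ ^ 2 := by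
        have h := hFt
        simp only [hF, hf] at h
        rwa [sub_self, mul_zero, Real.exp_zero, mul_one] at h
      have hsq : Real.exp (-d_min * (t - t₀)) ^ 2 =
          (Real.exp (2 * d_min * (t - t₀)))⁻¹ := by
        rw [sq, ← Real.exp_add, ← Real.exp_neg]
        ring_nf
      rw [mul_pow, hsq]
      have := (le_div_iff₀ hE).mpr hFt'
      rw [div_eq_mul_inv] at this
      linarith
    have h3 := Real.sqrt_le_sqrt h1
    rwa [Real.sqrt_sq (norm_nonneg _), Real.sqrt_sq (by positivity)] at h3
  refine ⟨hmain, ?_⟩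
  intro j
  have hcoord : |y t (Sum.inl j)| ≤ ‖y t‖ := abs_coord_le_norm (y t) (Sum.inl j)
  have hval : y t (Sum.inl j) =
      msol t (Sum.inl j) - (NormedSpace.exp ((t - t₀) • O11)).mulVec m01 j := by
    have : y t (Sum.inl j) = msol t (Sum.inl j) - mInf t (Sum.inl j) := rfl
    rw [this, hmInf t]
    simp
  rw [← hval]
  exact le_trans hcoord hmain
end

section
/- For the one-qubit amplitude damping model with Γ > 0 and initial values m₀ₓ, m₀ᵧ with C₀² := m₀ₓ² + m₀ᵧ² satisfying 0 < C₀² ≤ 1/2, there exist real ξ₁, ξ₂ and η such that ξ₂η - (Γ/2)m₀ₓ = 0, -ξ₁η - (Γ/2)m₀ᵧ = 0, and ξ₁m₀ᵧ - ξ₂m₀ₓ - Γη - Γ = 0, given explicitly by η = (-1 ∓ √(1-2C₀²))/2 and ξ₁ = -Γm₀ᵧ/(2η), ξ₂ = Γm₀ₓ/(2η). -/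
/-- For the one-qubit amplitude damping model with `Γ > 0` and
`0 < C₀² = m₀ₓ² + m₀ᵧ² ≤ 1/2`, the stationary algebraic equations
`ξ₂η - (Γ/2)m₀ₓ = 0`, `-ξ₁η - (Γ/2)m₀ᵧ = 0`, `ξ₁m₀ᵧ - ξ₂m₀ₓ - Γη - Γ = 0` are solved
explicitly by `η = (-1 ∓ √(1-2C₀²))/2`, `ξ₁ = -Γm₀ᵧ/(2η)`, `ξ₂ = Γm₀ₓ/(2η)`. -/
theorem one_qubit_stationary_solution (Γ m0x m0y : ℝ) (hΓ : 0 < Γ)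
    (hC0 : 0 < m0x ^ 2 + m0y ^ 2) (hC0' : m0x ^ 2 + m0y ^ 2 ≤ 1 / 2) :
    ∀ s : ℝ, s = 1 ∨ s = -1 →
      (fun η ξ₁ ξ₂ =>
          ξ₂ * η - (Γ / 2) * m0x = 0 ∧
          -ξ₁ * η - (Γ / 2) * m0y = 0 ∧
          ξ₁ * m0y - ξ₂ * m0x - Γ * η - Γ = 0)
        ((-1 + s * Real.sqrt (1 - 2 * (m0x ^ 2 + m0y ^ 2))) / 2)
        (-(Γ * m0y) / (2 * ((-1 + s * Real.sqrt (1 - 2 * (m0x ^ 2 + m0y ^ 2))) / 2)))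
        ((Γ * m0x) / (2 * ((-1 + s * Real.sqrt (1 - 2 * (m0x ^ 2 + m0y ^ 2))) / 2))) := by
  intro s hs
  set r := Real.sqrt (1 - 2 * (m0x ^ 2 + m0y ^ 2)) with hr
  have hnn : (0:ℝ) ≤ 1 - 2 * (m0x ^ 2 + m0y ^ 2) := by linarith
  have hr2 : r ^ 2 = 1 - 2 * (m0x ^ 2 + m0y ^ 2) := Real.sq_sqrt hnn
  have hr0 : 0 ≤ r := Real.sqrt_nonneg _
  have hr1 : r < 1 := by nlinarith
  have hs2 : s ^ 2 = 1 := by rcases hs with h | h <;> rw [h] <;> ring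
  have hsr : s * r < 1 := by
    rcases hs with h | h <;> rw [h] <;> nlinarith
  have hne : -1 + s * r ≠ 0 := by intro h; nlinarith
  have hne2 : ((-1 + s * r) / 2) ≠ 0 := by
    intro h; apply hne; linarith [h]
  beta_reduce
  refine ⟨?_, ?_, ?_⟩
  · field_simp; ring
  · field_simp; ring
  · have key : (-1+s*r)^2 + 2*(-1+s*r) + 2*(m0x^2+m0y^2) = 0 := by
      linear_combination r^2 * hs2 + hr2
    field_simp
    linear_combination (-Γ) * key
end

section
/- For the one-qubit amplitude damping stationary equations ξ₂η = (Γ/2)m₀ₓ, -ξ₁η = (Γ/2)m₀ᵧ, ξ₁m₀ᵧ - ξ₂m₀ₓ = Γη + Γ with Γ > 0 and C₀² = m₀ₓ² + m₀ᵧ² > 0, a real solution (ξ₁, ξ₂, η) exists if and only if C₀² ≤ 1/2. -/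
/-- For the one-qubit amplitude damping stationary equations
`ξ₂η = (Γ/2)m₀ₓ`, `-ξ₁η = (Γ/2)m₀ᵧ`, `ξ₁m₀ᵧ - ξ₂m₀ₓ = Γη + Γ` with `Γ > 0` and
`C₀² = m₀ₓ² + m₀ᵧ² > 0`, a real solution `(ξ₁, ξ₂, η)` exists if and only if
`C₀² ≤ 1/2`. -/
theorem one_qubit_stationary_solvability (Γ m0x m0y : ℝ) (hΓ : 0 < Γ)
    (hC0 : 0 < m0x ^ 2 + m0y ^ 2) :
    (∃ ξ₁ ξ₂ η : ℝ,
        ξ₂ * η = (Γ / 2) * m0x ∧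
        -ξ₁ * η = (Γ / 2) * m0y ∧
        ξ₁ * m0y - ξ₂ * m0x = Γ * η + Γ) ↔
      m0x ^ 2 + m0y ^ 2 ≤ 1 / 2 := by
  constructor
  · rintro ⟨ξ₁, ξ₂, η, h1, h2, h3⟩
    have hη : η ≠ 0 := by
      intro h
      subst h
      have h1' : (Γ / 2) * m0x = 0 := by linear_combination -h1
      have h2' : (Γ / 2) * m0y = 0 := by linear_combination -h2
      have hx : m0x = 0 := by
        rcases mul_eq_zero.mp h1' with h | h
        · linarith
        · exact h
      have hy : m0y = 0 := by
        rcases mul_eq_zero.mp h2' with h | h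
        · linarith
        · exact h
      rw [hx, hy] at hC0
      norm_num at hC0
    have key : Γ * (η ^ 2 + η + (m0x ^ 2 + m0y ^ 2) / 2) = 0 := by
      linear_combination -η * h3 - m0x * h1 - m0y * h2
    have key2 : η ^ 2 + η + (m0x ^ 2 + m0y ^ 2) / 2 = 0 := by
      rcases mul_eq_zero.mp key with h | h
      · exact absurd h hΓ.ne'
      · exact h
    nlinarith [sq_nonneg (2 * η + 1)]
  · intro hle
    obtain ⟨η, hηneg, hroot⟩ :
        ∃ η : ℝ, η < 0 ∧ η ^ 2 + η + (m0x ^ 2 + m0y ^ 2) / 2 = 0 := by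
      set C := m0x ^ 2 + m0y ^ 2 with hC
      have hs2 : Real.sqrt (1 - 2 * C) ^ 2 = 1 - 2 * C := Real.sq_sqrt (by linarith)
      have hs0 : 0 ≤ Real.sqrt (1 - 2 * C) := Real.sqrt_nonneg _
      have hslt : Real.sqrt (1 - 2 * C) < 1 := by nlinarith
      exact ⟨(-1 + Real.sqrt (1 - 2 * C)) / 2, by linarith, by nlinarith⟩
    have hη : η ≠ 0 := ne_of_lt hηneg
    refine ⟨-(Γ / 2) * m0y / η, (Γ / 2) * m0x / η, η, ?_, ?_, ?_⟩
    · field_simp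
    · field_simp
    · rw [div_mul_eq_mul_div, div_mul_eq_mul_div, div_sub_div_same, div_eq_iff hη]
      linear_combination -Γ * hroot
end
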